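/- arXiv:1511.00198 — 4 statements merged into one kernel-verified Lean document; each statement's English description precedes it below -/
import Mathlib

section
/- The infinite series ∑_{n=1}^∞ (12n^4 - 1)/(4n^4 + 1)^2 converges and equals 1/2. -/
/-!
Sophie Germain's identity `4m⁴ + 1 = (2m² - 2m + 1)(2m² + 2m + 1)` makes the series telescope:
with `q k = 2k² + 2k + 1` we have `q (m - 1) = 2m² - 2m + 1`, and the `m`-th term equals
`f (m - 1) - f m` for `f k = (2k + 1) / (2 q(k)²)`. Hence the sum is `f 0 = 1/2`,
since `f k → 0`.
-/

open Filter Topology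

theorem hasSum_sub_succ_of_antitone {f : ℕ → ℝ} {l : ℝ} (hf : ∀ n, f (n + 1) ≤ f n)
    (hl : Tendsto f atTop (𝓝 l)) : HasSum (fun n => f n - f (n + 1)) (f 0 - l) := by
  rw [hasSum_iff_tendsto_nat_of_nonneg (fun n => sub_nonneg.2 (hf n))]
  simp only [Finset.sum_range_sub']
  exact tendsto_const_nhds.sub hl

noncomputable def germainPotential (k : ℝ) : ℝ :=
  (2 * k + 1) / (2 * (2 * k ^ 2 + 2 * k + 1) ^ 2)

theorem germain_term_eq_sub (x : ℝ) (hx : 0 ≤ x) :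
    (12 * (x + 1) ^ 4 - 1) / (4 * (x + 1) ^ 4 + 1) ^ 2 =
      germainPotential x - germainPotential (x + 1) := by
  have hq₀ : 2 * x ^ 2 + 2 * x + 1 ≠ 0 := by positivity
  have hq₁ : 2 * (x + 1) ^ 2 + 2 * (x + 1) + 1 ≠ 0 := by positivity
  have hgermain : 4 * (x + 1) ^ 4 + 1 =
      (2 * x ^ 2 + 2 * x + 1) * (2 * (x + 1) ^ 2 + 2 * (x + 1) + 1) := by ring
  rw [germainPotential, germainPotential, hgermain]
  field_simp
  ring

theorem germain_term_nonneg (x : ℝ) (hx : 0 ≤ x) :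
    0 ≤ (12 * (x + 1) ^ 4 - 1) / (4 * (x + 1) ^ 4 + 1) ^ 2 := by
  have : 1 ≤ (x + 1) ^ 4 := one_le_pow₀ (by linarith)
  exact div_nonneg (by linarith) (by positivity)

theorem germainPotential_le_inv_add_one (x : ℝ) (hx : 0 ≤ x) :
    germainPotential x ≤ 1 / (x + 1) := by
  rw [germainPotential, div_le_div_iff₀ (by positivity) (by positivity)]
  nlinarith [sq_nonneg x, mul_nonneg hx (sq_nonneg x)]

theorem tendsto_germainPotential_nat :
    Tendsto (fun n : ℕ => germainPotential n) atTop (𝓝 0) :=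
  squeeze_zero (fun n => by unfold germainPotential; positivity)
    (fun n => germainPotential_le_inv_add_one n n.cast_nonneg)
    tendsto_one_div_add_atTop_nhds_zero_nat

theorem stmt1 :
    HasSum (fun n : ℕ =>
      (12 * ((n : ℝ) + 1) ^ 4 - 1) / (4 * ((n : ℝ) + 1) ^ 4 + 1) ^ 2) (1 / 2) := by
  have hterm (n : ℕ) := germain_term_eq_sub n n.cast_nonneg
  have hanti (n : ℕ) : germainPotential ((n + 1 : ℕ) : ℝ) ≤ germainPotential n := by
    push_cast
    exact sub_nonneg.1 (hterm n ▸ germain_term_nonneg n n.cast_nonneg)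
  simp only [hterm]
  convert hasSum_sub_succ_of_antitone hanti tendsto_germainPotential_nat using 1
  · simp only [Nat.cast_add_one]
  · norm_num [germainPotential]
end

section
/- The rational function y(x) = (2x - 1)(2x^2 - 2x - 1)(6x^2 - 6x + 1) / (2(2x^2 - 2x + 1)^6) satisfies the difference equation y(x) - y(x+1) = (1 - 480x^4 + 8736x^8 - 21504x^12 + 5376x^16)/(1 + 4x^4)^6 for all real x. -/
/-!
Shifting `x ↦ x + 1` turns `2x² - 2x + 1` into `2x² + 2x + 1`, and by Sophie Germain's identity
these two quadratics multiply to `1 + 4x⁴`. Hence both sides have the common denominator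
`2 (1 + 4x⁴)⁶`, and the difference equation reduces to a polynomial identity.
-/

section

variable {R : Type*}

lemma two_mul_sq_sub_two_mul_add_one_pos [CommRing R] [LinearOrder R] [IsStrictOrderedRing R]
    (x : R) : 0 < 2 * x ^ 2 - 2 * x + 1 := by
  nlinarith [sq_nonneg (2 * x - 1)]

lemma two_mul_sq_sub_two_mul_add_one_mul_add [CommRing R] (x : R) :
    (2 * x ^ 2 - 2 * x + 1) * (2 * x ^ 2 + 2 * x + 1) = 1 + 4 * x ^ 4 := by
  ring

end

theorem stmt2 (y : ℝ → ℝ)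
    (hy : ∀ x : ℝ, y x = (2 * x - 1) * (2 * x ^ 2 - 2 * x - 1) * (6 * x ^ 2 - 6 * x + 1)
      / (2 * (2 * x ^ 2 - 2 * x + 1) ^ 6)) :
    ∀ x : ℝ, y x - y (x + 1) =
      (1 - 480 * x ^ 4 + 8736 * x ^ 8 - 21504 * x ^ 12 + 5376 * x ^ 16)
        / (1 + 4 * x ^ 4) ^ 6 := by
  intro x
  have hshift : 2 * (x + 1) ^ 2 - 2 * (x + 1) + 1 = 2 * x ^ 2 + 2 * x + 1 := by ring
  have hp : 2 * x ^ 2 - 2 * x + 1 ≠ 0 := (two_mul_sq_sub_two_mul_add_one_pos x).ne'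
  have hq : 2 * x ^ 2 + 2 * x + 1 ≠ 0 := by
    simpa using (two_mul_sq_sub_two_mul_add_one_pos (-x)).ne'
  rw [hy, hy, hshift, ← two_mul_sq_sub_two_mul_add_one_mul_add, mul_pow,
    div_sub_div _ _ (by simp [hp]) (by simp [hq]), div_eq_div_iff (by simp [hp, hq]) (by simp [hp, hq])]
  ring
end

section
/- Let λ be a real number with λ ≠ -2 and λ ≠ -4, and suppose n^4 + λn^2 + (4+λ)^2/4 ≠ 0 for all integers n ≥ 1. Then ∑_{n=1}^∞ 2n/(n^4 + λn^2 + (4+λ)^2/4) = 2(3+λ)/((2+λ)(4+λ)). -/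
/-!
Writing `c = (4 + λ) / 2`, the denominator is a difference of squares,
`n⁴ + λn² + c² = (n² + c)² - (2n)² = f n * f (n + 2)` with `f x = (x - 1)² + c - 1`,
and since `f (n + 2) - f n = 4n` the summand is `(1 / f n - 1 / f (n + 2)) / 2`.
As `1 / f n = O(1 / n²)` is summable, the series telescopes to
`(1 / f 1 + 1 / f 2) / 2 = (1 / (c - 1) + 1 / c) / 2`.
-/

open Filter

theorem Summable.tsum_sub_nat_add {G : Type*} [AddCommGroup G] [TopologicalSpace G]
    [IsTopologicalAddGroup G] [T2Space G] {g : ℕ → G} (hg : Summable g) (k : ℕ) :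
    ∑' n, (g n - g (n + k)) = ∑ i ∈ Finset.range k, g i := by
  rw [hg.tsum_sub ((summable_nat_add_iff k).mpr hg), ← hg.sum_add_tsum_nat_add k,
    add_sub_cancel_right]

theorem summable_one_div_natCast_sq_add (d : ℝ) :
    Summable fun n : ℕ => 1 / ((n : ℝ) ^ 2 + d) := by
  refine Summable.of_norm_bounded_eventually_nat
    ((Real.summable_one_div_nat_pow.mpr one_lt_two).mul_left 2) ?_
  have hsq : Tendsto (fun n : ℕ => (n : ℝ) ^ 2) atTop atTop :=
    (tendsto_pow_atTop two_ne_zero).comp tendsto_natCast_atTop_atTop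
  filter_upwards [hsq.eventually_ge_atTop (2 * |d| + 1)] with n hn
  have hd : -|d| ≤ d := neg_abs_le d
  have hpos : 0 < (n : ℝ) ^ 2 + d := by linarith [abs_nonneg d]
  rw [Real.norm_eq_abs, abs_of_pos (one_div_pos.mpr hpos), mul_one_div,
    div_le_div_iff₀ hpos (by linarith [abs_nonneg d])]
  linarith

noncomputable def quarticFactor (l x : ℝ) : ℝ := (x - 1) ^ 2 + (2 + l) / 2

theorem quartic_eq_quarticFactor_mul (l x : ℝ) :
    x ^ 4 + l * x ^ 2 + (4 + l) ^ 2 / 4 = quarticFactor l x * quarticFactor l (x + 2) := by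
  unfold quarticFactor; ring

theorem two_mul_div_quartic_eq_sub (l x : ℝ) (h₀ : quarticFactor l x ≠ 0)
    (h₂ : quarticFactor l (x + 2) ≠ 0) :
    2 * x / (x ^ 4 + l * x ^ 2 + (4 + l) ^ 2 / 4)
      = (1 / quarticFactor l x - 1 / quarticFactor l (x + 2)) / 2 := by
  rw [quartic_eq_quarticFactor_mul]
  field_simp
  unfold quarticFactor
  ring

theorem stmt13_general (l : ℝ)
    (hden : ∀ n : ℕ, 1 ≤ n →
      ((n : ℝ) ^ 4 + l * (n : ℝ) ^ 2 + (4 + l) ^ 2 / 4) ≠ 0) :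
    ∑' n : ℕ, 2 * ((n : ℝ) + 1)
        / (((n : ℝ) + 1) ^ 4 + l * ((n : ℝ) + 1) ^ 2 + (4 + l) ^ 2 / 4)
      = 2 * (3 + l) / ((2 + l) * (4 + l)) := by
  have hf : ∀ n : ℕ, quarticFactor l (n + 1) ≠ 0 := fun n => by
    have := hden (n + 1) n.succ_pos
    push_cast at this
    exact left_ne_zero_of_mul (quartic_eq_quarticFactor_mul l _ ▸ this)
  set g : ℕ → ℝ := fun n => 1 / quarticFactor l (n + 1) with hg
  have hsum : Summable g := by
    simpa [hg, quarticFactor] using summable_one_div_natCast_sq_add ((2 + l) / 2)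
  have hterm : ∀ n : ℕ, 2 * ((n : ℝ) + 1)
      / (((n : ℝ) + 1) ^ 4 + l * ((n : ℝ) + 1) ^ 2 + (4 + l) ^ 2 / 4) = (g n - g (n + 2)) / 2 :=
    fun n => by
      have h₂ : quarticFactor l (n + 1 + 2) ≠ 0 := by
        convert hf (n + 2) using 2; push_cast; ring
      rw [two_mul_div_quartic_eq_sub l _ (hf n) h₂]
      simp only [hg]; push_cast; ring_nf
  have hf₁ : quarticFactor l 1 = (2 + l) / 2 := by unfold quarticFactor; ring
  have hf₂ : quarticFactor l 2 = (4 + l) / 2 := by unfold quarticFactor; ring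
  have h₁ : 2 + l ≠ 0 := by simpa [hf₁] using hf 0
  have h₂ : 4 + l ≠ 0 := by
    have := hf 1; norm_num [hf₂] at this; exact this
  simp_rw [hterm, tsum_div_const, hsum.tsum_sub_nat_add 2, Finset.sum_range_succ,
    Finset.sum_range_zero, hg]
  norm_num [hf₁, hf₂]
  field_simp
  ring

theorem stmt13 (l : ℝ) (h2 : l ≠ -2) (h4 : l ≠ -4)
    (hden : ∀ n : ℕ, 1 ≤ n →
      ((n : ℝ) ^ 4 + l * (n : ℝ) ^ 2 + (4 + l) ^ 2 / 4) ≠ 0) :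
    ∑' n : ℕ, 2 * ((n : ℝ) + 1)
        / (((n : ℝ) + 1) ^ 4 + l * ((n : ℝ) + 1) ^ 2 + (4 + l) ^ 2 / 4)
      = 2 * (3 + l) / ((2 + l) * (4 + l)) :=
  stmt13_general l hden
end

section
/- For every real x ≠ 0, the identity 1/(e^x - 1) = 1/x - 1/2 + ∑_{m=1}^∞ 2x/(x^2 + 4π^2 m^2) holds, with the series converging absolutely. -/
/-!
Substituting `z = x / (2πi)` into Mathlib's Mittag-Leffler expansion
`π cot (π z) = 1 / z + ∑ₙ (1 / (z - n) + 1 / (z + n))` turns `π cot (π z)` into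
`πi (eˣ + 1) / (eˣ - 1)` and each pair of poles into `4πi x / (x² + 4π² n²)`;
dividing by `2πi` and using `(eˣ + 1) / (2 (eˣ - 1)) = 1 / (eˣ - 1) + 1 / 2` gives the expansion.
-/

open Complex
open scoped Real

lemma Complex.hasSum_cotTerm {z : ℂ} (hz : z ∈ integerComplement) :
    HasSum (cotTerm z) (π * cot (π * z) - 1 / z) :=
  (summable_cotTerm hz).hasSum_iff_tendsto_nat.mpr (tendsto_logDeriv_euler_cot_sub hz)

lemma Complex.div_two_pi_I_mem_integerComplement {w : ℂ} (hw : exp w ≠ 1) :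
    w / (2 * π * I) ∈ integerComplement := by
  rintro ⟨n, hn⟩
  refine hw (exp_eq_one_iff.mpr ⟨n, ?_⟩)
  rw [hn, div_mul_cancel₀ _ two_pi_I_ne_zero]

lemma Complex.cotTerm_div_two_pi_I {z : ℂ} (hz : z ∈ integerComplement) (n : ℕ) :
    cotTerm z n / (2 * π * I)
      = 2 * (2 * π * I * z) / ((2 * π * I * z) ^ 2 + 4 * π ^ 2 * ((n : ℂ) + 1) ^ 2) := by
  have h₁ := integerComplement_add_ne_zero hz (n + 1)
  have h₂ := integerComplement_add_ne_zero hz (-(n + 1))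
  push_cast [← sub_eq_add_neg] at h₁ h₂
  have hden : (2 * π * I * z) ^ 2 + 4 * π ^ 2 * ((n : ℂ) + 1) ^ 2
      = -(4 * π ^ 2) * ((z + (n + 1)) * (z - (n + 1))) := by
    linear_combination (4 * π ^ 2 * z ^ 2) * I_sq
  rw [cotTerm_identity hz, hden]
  field_simp
  linear_combination 4 * z * I_sq

lemma Complex.pi_mul_cot_pi_mul_sub_one_div_div_two_pi_I {z : ℂ} (hz : z ≠ 0)
    (hexp : exp (2 * π * I * z) ≠ 1) :
    (π * cot (π * z) - 1 / z) / (2 * π * I)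
      = 1 / (exp (2 * π * I * z) - 1) - 1 / (2 * π * I * z) + 1 / 2 := by
  rw [cot_pi_eq_exp_ratio]
  generalize exp (2 * π * I * z) = q at *
  have hq : q - 1 ≠ 0 := sub_ne_zero.mpr hexp
  have hq' : 1 - q ≠ 0 := sub_ne_zero.mpr hexp.symm
  field_simp
  linear_combination π * z * (q ^ 2 - 1) * I_sq

theorem Complex.hasSum_one_div_exp_sub_one {w : ℂ} (hw : exp w ≠ 1) :
    HasSum (fun n : ℕ => 2 * w / (w ^ 2 + 4 * π ^ 2 * ((n : ℂ) + 1) ^ 2))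
      (1 / (exp w - 1) - 1 / w + 1 / 2) := by
  have hz := div_two_pi_I_mem_integerComplement hw
  obtain ⟨z, rfl⟩ : ∃ z, w = 2 * π * I * z := ⟨w / (2 * π * I), by field_simp⟩
  rw [mul_div_cancel_left₀ _ two_pi_I_ne_zero] at hz
  simpa only [cotTerm_div_two_pi_I hz,
      pi_mul_cot_pi_mul_sub_one_div_div_two_pi_I (integerComplement.ne_zero hz) hw]
    using (hasSum_cotTerm hz).div_const (2 * π * I)

theorem Real.hasSum_one_div_exp_sub_one {x : ℝ} (hx : x ≠ 0) :
    HasSum (fun n : ℕ => 2 * x / (x ^ 2 + 4 * π ^ 2 * ((n : ℝ) + 1) ^ 2))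
      (1 / (Real.exp x - 1) - 1 / x + 1 / 2) := by
  have hexp : Complex.exp x ≠ 1 := by
    exact_mod_cast Real.exp_eq_one_iff x |>.not.mpr hx
  rw [← Complex.hasSum_ofReal]
  push_cast
  exact Complex.hasSum_one_div_exp_sub_one hexp

theorem stmt17 (x : ℝ) (hx : x ≠ 0) :
    Summable (fun m : ℕ =>
      |2 * x / (x ^ 2 + 4 * Real.pi ^ 2 * ((m : ℝ) + 1) ^ 2)|) ∧
    1 / (Real.exp x - 1)
      = 1 / x - 1 / 2 + ∑' m : ℕ, 2 * x / (x ^ 2 + 4 * Real.pi ^ 2 * ((m : ℝ) + 1) ^ 2) := by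
  have h := Real.hasSum_one_div_exp_sub_one hx
  refine ⟨h.summable.abs, ?_⟩
  rw [h.tsum_eq]
  ring
end
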